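/- The free weight sequence is a valid representation for free trees: any two free trees of the same order with the same free weight sequence are isomorphic. -/

import Mathlib

inductive OTree : Type
  | node : List OTree → OTree

namespace OTree

def size : OTree → ℕ
  | .node cs => (cs.attach.map (fun c => size c.1)).sum + 1
decreasing_by simp only [OTree.node.sizeOf_spec]; have := List.sizeOf_lt_of_mem c.2; omega

def ws : OTree → List ℕ
  | .node cs => size (.node cs) :: (cs.attach.map (fun c => ws c.1)).flatten
decreasing_by simp only [OTree.node.sizeOf_spec]; have := List.sizeOf_lt_of_mem c.2; omega

def preorder : OTree → List OTree
  | .node cs => .node cs :: (cs.attach.map (fun c => preorder c.1)).flatten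
decreasing_by simp only [OTree.node.sizeOf_spec]; have := List.sizeOf_lt_of_mem c.2; omega

lemma size_pos (R : OTree) : 0 < R.size := by
  cases R with | node cs => simp only [OTree.size]; omega

end OTree

inductive RIso : OTree → OTree → Prop
  | node {cs cs' : List OTree} (l : List OTree) (hp : l.Perm cs')
      (hlen : cs.length = l.length)
      (h : ∀ (i : ℕ) (h1 : i < cs.length) (h2 : i < l.length), RIso cs[i] l[i]) :
      RIso (.node cs) (.node cs')

inductive Canonical : OTree → Prop
  | node {cs : List OTree}
      (hchain : List.Chain' (fun u v => OTree.ws v ≤ OTree.ws u) cs)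
      (h : ∀ c ∈ cs, Canonical c) : Canonical (.node cs)

def Centroidal {V : Type} [Fintype V] (G : SimpleGraph V) (u : V) : Prop :=
  ∀ v : ↥{x : V | x ≠ u},
    2 * Nat.card {w : ↥{x : V | x ≠ u} | (G.induce {x : V | x ≠ u}).Reachable v w}
      ≤ Fintype.card V

def IsParent (w : List ℕ) (i j : ℕ) : Prop :=
  i < j ∧ j < i + w.getD i 0 ∧ ∀ k, i < k → k < j → ¬ (j < k + w.getD k 0)

def graphOf (R : OTree) : SimpleGraph (Fin R.size) :=
  SimpleGraph.fromRel (fun i j => IsParent R.ws i.1 j.1)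

def rootIdx (R : OTree) : Fin R.size := ⟨0, R.size_pos⟩

def B (n : ℕ) : Set (List ℕ) := {s | ∃ R : OTree, Canonical R ∧ R.size = n ∧ R.ws = s}

def Succeq (s t : List ℕ) : Prop := t ≤ s ∨ s <+: t

def A (q n : ℕ) : Set (List ℕ × List ℕ) :=
  {p | p.1 ∈ B q ∧ p.2 ∈ B (n - q) ∧ Succeq p.1 p.2.tail}

def FwsUni {V : Type} [Fintype V] (G : SimpleGraph V) (s : List ℕ) : Prop :=
  ∃ R : OTree, Canonical R ∧ R.ws = s ∧
    ∃ f : graphOf R ≃g G, Centroidal G (f (rootIdx R))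

def FwsBi {V : Type} [Fintype V] (G : SimpleGraph V) (s : List ℕ) : Prop :=
  ∃ u v, u ≠ v ∧ G.Adj u v ∧ Centroidal G u ∧ Centroidal G v ∧
  ∃ A B : OTree, Canonical A ∧ Canonical B ∧ B.ws ≤ A.ws ∧ s = A.ws ++ B.ws ∧
  ∃ (fA : graphOf A ≃g (G.deleteEdges {s(u,v)}).induce
        {x | (G.deleteEdges {s(u,v)}).Reachable u x})
    (fB : graphOf B ≃g (G.deleteEdges {s(u,v)}).induce
        {x | (G.deleteEdges {s(u,v)}).Reachable v x}),
    (fA (rootIdx A)).1 = u ∧ (fB (rootIdx B)).1 = v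

def Fws {V : Type} [Fintype V] (G : SimpleGraph V) (s : List ℕ) : Prop :=
  ((∃! u, Centroidal G u) ∧ FwsUni G s) ∨ ((¬ ∃! u, Centroidal G u) ∧ FwsBi G s)

/-!
A weight sequence determines its ordered tree: it starts with the size of the tree, and each
child's sequence starts with that child's size, which is also its length, so the concatenation of
the children's sequences splits in only one way. Hence two unicentroidal trees with the same free
weight sequence are isomorphic to the graph of one ordered tree. A bicentroidal tree is its two
halves, the components of the central edge's endpoints once that bridge is deleted, joined by
the edge, and the free weight sequence determines both rooted halves in the same way. The two
cases cannot share a sequence: its first entry is `n` in the first and a half's size `< n` in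
the second.
-/

namespace OTree

theorem size_node (cs : List OTree) : size (.node cs) = (cs.map size).sum + 1 := by
  rw [size, List.attach_map_val]

theorem ws_node (cs : List OTree) : ws (.node cs) = size (.node cs) :: (cs.map ws).flatten := by
  rw [ws, List.attach_map_val]

theorem head?_ws (R : OTree) : R.ws.head? = some R.size := by
  cases R; rw [ws_node]; rfl

theorem ws_ne_nil (R : OTree) : R.ws ≠ [] := by
  simp [← List.head?_eq_none_iff, head?_ws]

theorem length_ws : ∀ R : OTree, R.ws.length = R.size
  | .node cs => by
    have ih : ∀ c ∈ cs, (List.length ∘ ws) c = c.size := fun c hc => length_ws c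
    rw [ws_node, size_node, List.length_cons, List.length_flatten, List.map_map,
      List.map_congr_left ih]
decreasing_by simp only [OTree.node.sizeOf_spec]; have := List.sizeOf_lt_of_mem hc; omega

theorem ws_append_inj {R S : OTree} {l l' : List ℕ} (h : R.ws ++ l = S.ws ++ l') :
    R.ws = S.ws ∧ l = l' := by
  have hsize : R.size = S.size := by
    simpa [List.head?_append, head?_ws] using congrArg List.head? h
  exact List.append_inj h (by rw [length_ws, length_ws, hsize])

theorem eq_of_flatten_map_ws_eq {cs cs' : List OTree}
    (hinj : ∀ c ∈ cs, ∀ c', c.ws = c'.ws → c = c')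
    (h : (cs.map ws).flatten = (cs'.map ws).flatten) : cs = cs' := by
  induction cs generalizing cs' with
  | nil => cases cs' with
    | nil => rfl
    | cons c' cs' => simp [ws_ne_nil] at h
  | cons c cs ih => cases cs' with
    | nil => simp [ws_ne_nil] at h
    | cons c' cs' =>
      obtain ⟨hc, hcs⟩ := ws_append_inj (by simpa using h)
      rw [hinj c (by simp) c' hc, ih (fun d hd => hinj d (by simp [hd])) hcs]

theorem ws_injective : Function.Injective ws
  | .node cs, .node cs', h => by
    rw [ws_node, ws_node, List.cons.injEq] at h
    rw [eq_of_flatten_map_ws_eq (fun c hc c' => @ws_injective c c') h.2]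
decreasing_by simp only [OTree.node.sizeOf_spec]; have := List.sizeOf_lt_of_mem hc; omega

end OTree

namespace SimpleGraph

variable {V V' : Type*} {G : SimpleGraph V} {G' : SimpleGraph V'}

def Iso.supEdge (φ : G ≃g G') {a b : V} {a' b' : V'} (ha : φ a = a') (hb : φ b = b') :
    G ⊔ edge a b ≃g G' ⊔ edge a' b' where
  toEquiv := φ.toEquiv
  map_rel_iff' := by
    subst ha hb
    intro x y
    simp [edge_adj, φ.injective.eq_iff, φ.map_adj_iff]

variable {u v : V}

theorem reachable_deleteEdges_or_reachable (hG : G.Preconnected) (x : V) :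
    (G.deleteEdges {s(u, v)}).Reachable u x ∨ (G.deleteEdges {s(u, v)}).Reachable v x := by
  induction (reachable_iff_reflTransGen u x).mp (hG u x) with
  | refl => exact .inl .rfl
  | @tail y z _ hyz ih =>
    by_cases he : s(y, z) = s(u, v)
    · rcases Sym2.eq_iff.mp he with ⟨-, rfl⟩ | ⟨-, rfl⟩
      · exact .inr .rfl
      · exact .inl .rfl
    · have hyz' : (G.deleteEdges {s(u, v)}).Adj y z := deleteEdges_adj.mpr ⟨hyz, he⟩
      exact ih.imp (·.trans hyz'.reachable) (·.trans hyz'.reachable)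

theorem IsBridge.adj_iff_of_reachable_deleteEdges (hG : G.Preconnected)
    (hbr : G.IsBridge s(u, v)) {a b : V} (ha : (G.deleteEdges {s(u, v)}).Reachable u a)
    (hb : (G.deleteEdges {s(u, v)}).Reachable v b) : G.Adj a b ↔ a = u ∧ b = v := by
  have huv : ¬ (G.deleteEdges {s(u, v)}).Reachable u v := isBridge_iff.mp hbr
  constructor
  · intro hab
    by_contra hne
    have hab' : (G.deleteEdges {s(u, v)}).Adj a b := by
      refine deleteEdges_adj.mpr ⟨hab, fun he => ?_⟩
      rcases Sym2.eq_iff.mp he with h | ⟨rfl, -⟩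
      exacts [hne h, huv ha]
    exact huv ((ha.trans hab'.reachable).trans hb.symm)
  · rintro ⟨rfl, rfl⟩
    exact hbr.reachable_iff_adj.mp (hG _ _)

theorem IsBridge.ne_of_reachable_deleteEdges (hbr : G.IsBridge s(u, v)) {w a b : V}
    (ha : (G.deleteEdges {s(u, v)}).Reachable w a)
    (hb : (G.deleteEdges {s(u, v)}).Reachable w b) : s(a, b) ≠ s(u, v) := by
  rintro he
  rcases Sym2.eq_iff.mp he with ⟨rfl, rfl⟩ | ⟨rfl, rfl⟩
  exacts [isBridge_iff.mp hbr (ha.symm.trans hb), isBridge_iff.mp hbr (hb.symm.trans ha)]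

noncomputable def isoSumSupEdgeOfIsBridge (hG : G.Preconnected) (hbr : G.IsBridge s(u, v)) :
    ((G.deleteEdges {s(u, v)}).induce {x | (G.deleteEdges {s(u, v)}).Reachable u x}).sum
      ((G.deleteEdges {s(u, v)}).induce {x | (G.deleteEdges {s(u, v)}).Reachable v x}) ⊔
      edge (.inl ⟨u, .rfl⟩) (.inr ⟨v, .rfl⟩) ≃g G where
  toEquiv := Equiv.ofBijective (Sum.elim Subtype.val Subtype.val)
    ⟨Subtype.val_injective.sumElim Subtype.val_injective
      fun x y hxy => isBridge_iff.mp hbr (x.2.trans (hxy ▸ y.2).symm),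
    fun x => (reachable_deleteEdges_or_reachable hG x).elim
      (fun hx => ⟨.inl ⟨x, hx⟩, rfl⟩) (fun hx => ⟨.inr ⟨x, hx⟩, rfl⟩)⟩
  map_rel_iff' := by
    rintro (⟨a, ha⟩ | ⟨a, ha⟩) (⟨b, hb⟩ | ⟨b, hb⟩)
    · have hne := hbr.ne_of_reachable_deleteEdges ha hb
      simpa [edge_adj, deleteEdges_adj] using fun _ : G.Adj a b => hne
    · simpa [edge_adj] using hbr.adj_iff_of_reachable_deleteEdges hG ha hb
    · have hadj := hbr.adj_iff_of_reachable_deleteEdges hG hb ha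
      simpa [edge_adj, G.adj_comm a, and_comm] using hadj
    · have hne := hbr.ne_of_reachable_deleteEdges ha hb
      simpa [edge_adj, deleteEdges_adj] using fun _ : G.Adj a b => hne

end SimpleGraph

open SimpleGraph

section FreeWeightSequence

variable {V V' : Type} [Fintype V] [Fintype V'] {G : SimpleGraph V} {G' : SimpleGraph V'}
  {s : List ℕ}

theorem FwsUni.head?_eq (h : FwsUni G s) : s.head? = some (Fintype.card V) := by
  obtain ⟨R, -, rfl, f, -⟩ := h
  rw [R.head?_ws, ← Fintype.card_fin R.size, Fintype.card_congr f.toEquiv]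

theorem FwsUni.nonempty_iso (h : FwsUni G s) (h' : FwsUni G' s) : Nonempty (G ≃g G') := by
  obtain ⟨R, -, rfl, f, -⟩ := h
  obtain ⟨R', -, hR, f', -⟩ := h'
  cases OTree.ws_injective hR
  exact ⟨f.symm.trans f'⟩

theorem FwsBi.exists_iso (hG : G.IsTree) (h : FwsBi G s) :
    ∃ A B : OTree, s = A.ws ++ B.ws ∧ Nonempty
      ((graphOf A).sum (graphOf B) ⊔ edge (.inl (rootIdx A)) (.inr (rootIdx B)) ≃g G) := by
  obtain ⟨u, v, -, huv, -, -, A, B, -, -, -, hs, fA, fB, hA, hB⟩ := h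
  have hbr : G.IsBridge s(u, v) := isAcyclic_iff_forall_isBridge.mp hG.isAcyclic huv
  refine ⟨A, B, hs, ⟨.trans ?_ (isoSumSupEdgeOfIsBridge hG.connected.preconnected hbr)⟩⟩
  exact (fA.sumCongr fB).supEdge (congrArg Sum.inl (Subtype.ext hA))
    (congrArg Sum.inr (Subtype.ext hB))

theorem FwsBi.head?_ne (hG : G.IsTree) (h : FwsBi G s) : s.head? ≠ some (Fintype.card V) := by
  obtain ⟨A, B, rfl, ⟨f⟩⟩ := h.exists_iso hG
  have hcard : Fintype.card V = A.size + B.size := by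
    rw [← Fintype.card_congr f.toEquiv, Fintype.card_sum, Fintype.card_fin, Fintype.card_fin]
  simp [List.head?_append, A.head?_ws, hcard, B.size_pos.ne']

theorem FwsBi.nonempty_iso (hG : G.IsTree) (hG' : G'.IsTree) (h : FwsBi G s) (h' : FwsBi G' s) :
    Nonempty (G ≃g G') := by
  obtain ⟨A, B, rfl, ⟨f⟩⟩ := h.exists_iso hG
  obtain ⟨A', B', hs, ⟨f'⟩⟩ := h'.exists_iso hG'
  obtain ⟨hA, hB⟩ := OTree.ws_append_inj hs
  cases OTree.ws_injective hA
  cases OTree.ws_injective hB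
  exact ⟨f.symm.trans f'⟩

end FreeWeightSequence

theorem stmt12 {V V' : Type} [Fintype V] [Fintype V']
    (G : SimpleGraph V) (G' : SimpleGraph V') (hG : G.IsTree) (hG' : G'.IsTree)
    (hcard : Fintype.card V = Fintype.card V')
    (s : List ℕ) (h : Fws G s) (h' : Fws G' s) : Nonempty (G ≃g G') := by
  rcases h with ⟨-, h⟩ | ⟨-, h⟩ <;> rcases h' with ⟨-, h'⟩ | ⟨-, h'⟩
  · exact h.nonempty_iso h'
  · exact absurd (hcard ▸ h.head?_eq) (h'.head?_ne hG')
  · exact absurd (hcard ▸ h'.head?_eq) (h.head?_ne hG)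
  · exact h.nonempty_iso hG hG' h'
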